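/- For every λ ∈ ℂ, the following are equivalent: (a) d₁(λ) is injective, ker d₀(λ) = ran d₁(λ), and the range of d₀(λ) is closed; (b) the restriction of x−1−λ to ker(y) is a bijection of ker(y) onto ker(y), and the induced operator x̄ − λ on H/R(y) is bounded below (injective with closed range). (Equivalently, σ_{π,1}((y,x),H) = {0} × (Sp(x−1, ker y) ∪ Π(x̄, H/R(y))).) -/

import Mathlib

noncomputable def inducedOnQuotient {H : Type*} [NormedAddCommGroup H] [NormedSpace ℂ H]
    (S : Submodule ℂ H) (x : H →L[ℂ] H) (hx : ∀ v ∈ S, x v ∈ S) :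
    (H ⧸ S) →L[ℂ] (H ⧸ S) where
  toLinearMap := Submodule.mapQ S S (x : H →ₗ[ℂ] H) (fun v hv => hx v hv)
  cont := by
    show Continuous (⇑(Submodule.mapQ S S (x : H →ₗ[ℂ] H) fun v hv => hx v hv))
    rw [← S.isOpenQuotientMap_mkQ.continuous_comp_iff]
    have h : (⇑(Submodule.mapQ S S (x : H →ₗ[ℂ] H) fun v hv => hx v hv)) ∘ ⇑S.mkQ
        = ⇑S.mkQ ∘ ⇑x := by
      funext v
      simp [Submodule.mapQ_apply]
    rw [h]
    exact S.isOpenQuotientMap_mkQ.continuous.comp x.continuous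

/-!
The relation `y x - x y = y` reads `y (x - 1 - λ) = (x - λ) y`. Hence `x - 1 - λ` maps `ker y`
into itself and `x - λ` descends to `T = x̄ - λ` on `H ⧸ R(y)`. A diagram chase in the complex
shows that `d₁(λ)` is injective iff `x - 1 - λ` is injective on `ker y`, and that
`ker d₀(λ) ⊆ ran d₁(λ)` iff `x - 1 - λ` maps `ker y` onto itself and `T` is injective.
The range of `d₀(λ)` is the preimage of the range of `T` under the quotient map, so one is closed
iff the other is. Finally, `H ⧸ R(y)` is a Banach space since `R(y)` is closed, and there the
open mapping theorem makes "injective with closed range" the same as "bounded below".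
-/

open Function LinearMap

theorem ContinuousLinearMap.exists_pos_mul_norm_le_iff_injective_and_isClosed_range
    {𝕜 E F : Type*} [NontriviallyNormedField 𝕜] [NormedAddCommGroup E] [NormedSpace 𝕜 E]
    [CompleteSpace E] [NormedAddCommGroup F] [NormedSpace 𝕜 F] [CompleteSpace F] (f : E →L[𝕜] F) :
    (∃ c, 0 < c ∧ ∀ v, c * ‖v‖ ≤ ‖f v‖) ↔ Injective f ∧ IsClosed (Set.range f) := by
  rw [← antilipschitzWith_iff_exists_mul_le_norm]
  exact ⟨fun ⟨_, hK⟩ => ⟨hK.injective, hK.isClosed_range f.uniformContinuous⟩,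
    fun ⟨hinj, hcl⟩ => f.antilipschitz_of_injective_of_isClosed_range hinj hcl⟩

theorem mul_sub_one_sub_smul_eq_sub_smul_mul {𝕜 A : Type*} [CommRing 𝕜] [Ring A] [Algebra 𝕜 A]
    {x y : A} (h : y * x - x * y = y) (l : 𝕜) : y * (x - 1 - l • 1) = (x - l • 1) * y := by
  rw [mul_sub, mul_sub, sub_mul, mul_one, Algebra.mul_smul_comm, mul_one, Algebra.smul_mul_assoc,
    one_mul, sub_left_inj, sub_eq_iff_eq_add]
  exact sub_eq_iff_eq_add'.mp h

section KoszulComplex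

variable {R M : Type*} [Ring R] [AddCommGroup M] [Module R M] {y z w : M →ₗ[R] M}

theorem injective_neg_prod_iff_injOn_ker :
    Injective ((-z).prod y) ↔ Set.InjOn z (ker y) := by
  rw [← ker_eq_bot, ker_prod, ker_neg, inf_comm, ← disjoint_iff, disjoint_ker_iff_injOn]

theorem mapsTo_ker_of_semiconj (hyz : Semiconj y z w) : Set.MapsTo z (ker y) (ker y) := by
  intro v hv
  rw [SetLike.mem_coe, mem_ker] at hv ⊢
  rw [hyz v, hv, map_zero]

theorem range_neg_prod_le_ker_coprod (hyz : Semiconj y z w) :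
    range ((-z).prod y) ≤ ker (y.coprod w) := by
  rintro _ ⟨c, rfl⟩
  simp [hyz c]

theorem surjOn_ker_of_ker_coprod_le (h : ker (y.coprod w) ≤ range ((-z).prod y)) :
    Set.SurjOn z (ker y) (ker y) := by
  intro a ha
  obtain ⟨c, hc⟩ := h (show (a, 0) ∈ ker (y.coprod w) by simpa using ha)
  simp only [LinearMap.prod_apply, LinearMap.coe_neg, Function.prod_apply, Pi.neg_apply,
    Prod.mk.injEq] at hc
  exact ⟨-c, by simp [hc.2], by simp [hc.1]⟩

variable {T : (M ⧸ range y) →ₗ[R] (M ⧸ range y)}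

theorem range_coprod_eq_comap_range (hT : Semiconj (range y).mkQ w T) :
    range (y.coprod w) = (range T).comap (range y).mkQ := by
  ext v
  constructor
  · rintro ⟨⟨a, b⟩, rfl⟩
    refine ⟨(range y).mkQ b, ?_⟩
    rw [← hT, Submodule.mkQ_apply, Submodule.mkQ_apply, Submodule.Quotient.eq]
    exact ⟨-a, by simp⟩
  · rintro ⟨q, hq⟩
    obtain ⟨b, rfl⟩ := (range y).mkQ_surjective q
    rw [← hT, Submodule.mkQ_apply, Submodule.mkQ_apply, Submodule.Quotient.eq] at hq
    obtain ⟨a, ha⟩ := hq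
    exact ⟨(-a, b), by simp [ha]⟩

theorem isClosed_range_coprod_iff [TopologicalSpace M] [ContinuousAdd M]
    (hT : Semiconj (range y).mkQ w T) :
    IsClosed (Set.range (y.coprod w)) ↔ IsClosed (Set.range T) := by
  rw [← LinearMap.coe_range, range_coprod_eq_comap_range hT, Submodule.comap_coe,
    LinearMap.coe_range]
  exact (range y).isOpenQuotientMap_mkQ.isQuotientMap.isClosed_preimage

theorem injective_of_ker_coprod_le (hT : Semiconj (range y).mkQ w T)
    (h : ker (y.coprod w) ≤ range ((-z).prod y)) : Injective T := by
  rw [← ker_eq_bot, Submodule.eq_bot_iff]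
  intro q hq
  obtain ⟨b, rfl⟩ := (range y).mkQ_surjective q
  rw [mem_ker, ← hT, Submodule.mkQ_apply, Submodule.Quotient.mk_eq_zero] at hq
  obtain ⟨a, ha⟩ := hq
  obtain ⟨c, hc⟩ := h (show (-a, b) ∈ ker (y.coprod w) by simp [ha])
  simp only [LinearMap.prod_apply, LinearMap.coe_neg, Function.prod_apply, Pi.neg_apply,
    Prod.mk.injEq] at hc
  rw [Submodule.mkQ_apply, Submodule.Quotient.mk_eq_zero]
  exact ⟨c, hc.2⟩

theorem ker_coprod_le_of_surjOn_of_injective (hyz : Semiconj y z w)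
    (hT : Semiconj (range y).mkQ w T) (hz : Set.SurjOn z (ker y) (ker y)) (hTinj : Injective T) :
    ker (y.coprod w) ≤ range ((-z).prod y) := by
  rintro ⟨a, b⟩ hab
  rw [mem_ker, coprod_apply] at hab
  obtain ⟨c₀, rfl⟩ : b ∈ range y := by
    rw [← Submodule.Quotient.mk_eq_zero, ← Submodule.mkQ_apply, ← hTinj.eq_iff, map_zero, ← hT,
      Submodule.mkQ_apply, Submodule.Quotient.mk_eq_zero, eq_neg_of_add_eq_zero_right hab,
      ← map_neg]
    exact mem_range_self y (-a)
  obtain ⟨k, hk, hzk⟩ := hz (show a + z c₀ ∈ ker y by rwa [mem_ker, map_add, hyz c₀])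
  rw [SetLike.mem_coe, mem_ker] at hk
  exact ⟨c₀ - k, by simp [hzk, hk]⟩

theorem injective_neg_prod_and_ker_coprod_eq_range_iff (hyz : Semiconj y z w)
    (hT : Semiconj (range y).mkQ w T) :
    Injective ((-z).prod y) ∧ ker (y.coprod w) = range ((-z).prod y) ↔
      Set.BijOn z (ker y) (ker y) ∧ Injective T := by
  rw [le_antisymm_iff, injective_neg_prod_iff_injOn_ker]
  exact ⟨fun ⟨hinj, hle, _⟩ =>
      ⟨⟨mapsTo_ker_of_semiconj hyz, hinj, surjOn_ker_of_ker_coprod_le hle⟩,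
        injective_of_ker_coprod_le hT hle⟩,
    fun ⟨hbij, hTinj⟩ =>
      ⟨hbij.injOn, ker_coprod_le_of_surjOn_of_injective hyz hT hbij.surjOn hTinj,
        range_neg_prod_le_ker_coprod hyz⟩⟩

end KoszulComplex

/-- Let `H` be a complex Hilbert space, `x, y` bounded operators on `H`
with `y ∘ x - x ∘ y = y` and `R(y)` closed.  For every `λ ∈ ℂ` the following are
equivalent: (a) `d₁(λ)` is injective, `ker d₀(λ) = ran d₁(λ)`, and `d₀(λ)` has closed
range; (b) the restriction of `x - 1 - λ` to `ker y` is a bijection of `ker y` onto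
`ker y`, and the operator `x̄ - λ` induced on `H ⧸ R(y)` is bounded below.
(Equivalently, `σ_{π,1}((y,x),H) = {0} × (Sp(x-1, ker y) ∪ Π(x̄, H ⧸ R(y)))`.) -/
theorem sigma_pi_one_characterization
    {H : Type*} [NormedAddCommGroup H] [InnerProductSpace ℂ H] [CompleteSpace H]
    (x y : H →L[ℂ] H) (hcomm : y ∘L x - x ∘L y = y)
    (hclosed : IsClosed ((LinearMap.range (y : H →ₗ[ℂ] H) : Submodule ℂ H) : Set H))
    (hran : ∀ v ∈ LinearMap.range (y : H →ₗ[ℂ] H), x v ∈ LinearMap.range (y : H →ₗ[ℂ] H)) :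
    ∀ l : ℂ,
      (Function.Injective ⇑((-(x - 1 - l • (1 : H →L[ℂ] H))).prod y) ∧
          LinearMap.ker ((y.coprod (x - l • (1 : H →L[ℂ] H)) : H × H →L[ℂ] H) : H × H →ₗ[ℂ] H) =
            LinearMap.range (((-(x - 1 - l • (1 : H →L[ℂ] H))).prod y : H →L[ℂ] H × H) : H →ₗ[ℂ] H × H) ∧
          IsClosed (Set.range ⇑(y.coprod (x - l • (1 : H →L[ℂ] H))))) ↔
        (Set.BijOn ⇑(x - 1 - l • (1 : H →L[ℂ] H))
            (LinearMap.ker (y : H →ₗ[ℂ] H) : Set H) (LinearMap.ker (y : H →ₗ[ℂ] H) : Set H) ∧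
          ∃ c : ℝ, 0 < c ∧ ∀ v : H ⧸ LinearMap.range (y : H →ₗ[ℂ] H),
            c * ‖v‖ ≤ ‖inducedOnQuotient (LinearMap.range (y : H →ₗ[ℂ] H)) x hran v - l • v‖) := by
  intro l
  have hyz : Semiconj y ⇑(x - 1 - l • 1 : H →L[ℂ] H) ⇑(x - l • 1 : H →L[ℂ] H) := fun v =>
    congr($(mul_sub_one_sub_smul_eq_sub_smul_mul hcomm l) v)
  set T := inducedOnQuotient _ x hran - l • (1 : (H ⧸ LinearMap.range (y : H →ₗ[ℂ] H)) →L[ℂ] _)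
  have hT : Semiconj (LinearMap.range (y : H →ₗ[ℂ] H)).mkQ ⇑(x - l • 1 : H →L[ℂ] H) T :=
    fun _ => rfl
  rw [← and_assoc]
  calc _ ↔ (Set.BijOn _ _ _ ∧ Injective T) ∧ IsClosed (Set.range T) :=
        (injective_neg_prod_and_ker_coprod_eq_range_iff (T := (T : _ →ₗ[ℂ] _)) hyz hT).and
          (isClosed_range_coprod_iff (y := (y : H →ₗ[ℂ] H)) (w := (x - l • 1 : H →L[ℂ] H))
            (T := (T : _ →ₗ[ℂ] _)) hT)
    _ ↔ _ := and_assoc.trans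
        (Iff.rfl.and T.exists_pos_mul_norm_le_iff_injective_and_isClosed_range.symm)
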